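/- arXiv:2405.16430 — 3 statements merged into one kernel-verified Lean document; each statement's English description precedes it below -/
import Mathlib

section
/- Let α : ℕ → ℝ be a nonincreasing sequence (antitone), let b : ℕ → ℝ, let v ∈ ℝ, and let k', k be natural numbers with k' ≤ k. If v ≤ b (j+1) for every j with k' ≤ j ≤ k−1, then v·(α k') − ∑_{j=k'}^{k−1} b (j+1) · (α j − α (j+1)) ≤ v·(α k). -/
/-- No-profitable-overbid lemma for sponsored search auctions: obtaining a
higher slot `k' ≤ k` by overbidding, while paying the bids of the leapfrogged
agents (all at least `v`), cannot increase utility. -/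
theorem ssa_no_profitable_overbid (α b : ℕ → ℝ) (v : ℝ) (k' k : ℕ)
    (hα : Antitone α) (hkk : k' ≤ k)
    (hb : ∀ j, k' ≤ j → j ≤ k - 1 → v ≤ b (j + 1)) :
    v * α k' - ∑ j ∈ Finset.Ico k' k, b (j + 1) * (α j - α (j + 1)) ≤ v * α k := by
  have tel : ∀ n, k' ≤ n → ∑ j ∈ Finset.Ico k' n, (α j - α (j+1)) = α k' - α n := by
    intro n hn
    induction n, hn using Nat.le_induction with
    | base => simp
    | succ n hn ih => rw [Finset.sum_Ico_succ_top hn, ih]; ring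
  have h1 : ∑ j ∈ Finset.Ico k' k, v * (α j - α (j+1)) ≤
      ∑ j ∈ Finset.Ico k' k, b (j+1) * (α j - α (j+1)) := by
    apply Finset.sum_le_sum
    intro j hj
    simp only [Finset.mem_Ico] at hj
    have hble := hb j hj.1 (by omega)
    have hnn : 0 ≤ α j - α (j+1) := sub_nonneg.mpr (hα (Nat.le_succ j))
    exact mul_le_mul_of_nonneg_right hble hnn
  rw [← Finset.mul_sum, tel k hkk] at h1
  linarith
end

section
/- Let K ≥ 1 be a natural number, let α : ℕ → ℝ be nonincreasing (antitone), let β : ℕ → ℝ be nonincreasing (antitone), let v ∈ ℝ, and define for each slot p the utility U p = v·(α p) − ∑_{j=p}^{K} β j · (α j − α (j+1)). Suppose p* is a natural number with 1 ≤ p* ≤ K+1 such that β j ≥ v for all j with 1 ≤ j < p* and β j ≤ v for all j with p* ≤ j ≤ K. Then for every p with 1 ≤ p ≤ K+1, U p ≤ U p*. -/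
/-- Incentive compatibility of the sponsored search auction: the truthful slot
`p*` maximizes the agent's utility over all slots it could obtain. -/
theorem ssa_incentive_compatibility (K : ℕ) (hK : 1 ≤ K) (α β : ℕ → ℝ)
    (hα : Antitone α) (hβ : Antitone β) (v : ℝ) (U : ℕ → ℝ)
    (hU : ∀ p, U p = v * α p - ∑ j ∈ Finset.Icc p K, β j * (α j - α (j + 1)))
    (pstar : ℕ) (hp1 : 1 ≤ pstar) (hp2 : pstar ≤ K + 1)
    (hhigh : ∀ j, 1 ≤ j → j < pstar → v ≤ β j)
    (hlow : ∀ j, pstar ≤ j → j ≤ K → β j ≤ v) :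
    ∀ p, 1 ≤ p → p ≤ K + 1 → U p ≤ U pstar := by
  have key : ∀ m n : ℕ, m ≤ n → n ≤ K + 1 →
      U n - U m = ∑ j ∈ Finset.Ico m n, (β j - v) * (α j - α (j + 1)) := by
    intro m n hmn hn
    have hIcc : ∀ q : ℕ, Finset.Icc q K = Finset.Ico q (K + 1) := fun q =>
      (Finset.Ico_add_one_right_eq_Icc q K).symm
    have hsplit : ∑ j ∈ Finset.Ico m n, β j * (α j - α (j + 1)) +
        ∑ j ∈ Finset.Ico n (K + 1), β j * (α j - α (j + 1)) =
        ∑ j ∈ Finset.Ico m (K + 1), β j * (α j - α (j + 1)) :=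
      Finset.sum_Ico_consecutive _ hmn hn
    have htel : ∑ j ∈ Finset.Ico m n, (α (j + 1) - α j) = α n - α m := by
      rw [Finset.sum_Ico_eq_sub _ hmn, Finset.sum_range_sub, Finset.sum_range_sub]
      ring
    have htel' : ∑ j ∈ Finset.Ico m n, (α j - α (j + 1)) = α m - α n := by
      have := htel
      have h2 : ∑ j ∈ Finset.Ico m n, (α j - α (j + 1)) =
          -∑ j ∈ Finset.Ico m n, (α (j + 1) - α j) := by
        rw [← Finset.sum_neg_distrib]
        exact Finset.sum_congr rfl (fun j _ => by ring)
      rw [h2, htel]; ring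
    rw [hU n, hU m, hIcc, hIcc, ← hsplit]
    have : ∑ j ∈ Finset.Ico m n, (β j - v) * (α j - α (j + 1)) =
        ∑ j ∈ Finset.Ico m n, β j * (α j - α (j + 1)) -
        v * ∑ j ∈ Finset.Ico m n, (α j - α (j + 1)) := by
      rw [Finset.mul_sum, ← Finset.sum_sub_distrib]
      exact Finset.sum_congr rfl (fun j _ => by ring)
    rw [this, htel']
    ring
  intro p hp1' hp2'
  rcases le_or_gt p pstar with h | h
  · -- p ≤ pstar : U pstar - U p = ∑_{j∈[p,pstar)} (β j - v)(α j - α (j+1)) ≥ 0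
    have := key p pstar h hp2
    have hnn : 0 ≤ ∑ j ∈ Finset.Ico p pstar, (β j - v) * (α j - α (j + 1)) := by
      apply Finset.sum_nonneg
      intro j hj
      rw [Finset.mem_Ico] at hj
      have hb : v ≤ β j := hhigh j (le_trans hp1' hj.1) hj.2
      have ha : α (j + 1) ≤ α j := hα (Nat.le_succ j)
      have := mul_nonneg (sub_nonneg.mpr hb) (sub_nonneg.mpr ha)
      linarith
    linarith
  · -- pstar < p : U p - U pstar = ∑_{j∈[pstar,p)} (β j - v)(α j - α (j+1)) ≤ 0
    have := key pstar p (le_of_lt h) hp2'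
    have hnp : ∑ j ∈ Finset.Ico pstar p, (β j - v) * (α j - α (j + 1)) ≤ 0 := by
      apply Finset.sum_nonpos
      intro j hj
      rw [Finset.mem_Ico] at hj
      have hjK : j ≤ K := by omega
      have hb : β j ≤ v := hlow j hj.1 hjK
      have ha : α (j + 1) ≤ α j := hα (Nat.le_succ j)
      exact mul_nonpos_of_nonpos_of_nonneg (by linarith) (by linarith)
    linarith
end

section
/- Let s₁, s₂, v₁, v₂, l, M, Δt be real numbers and let u₁ > 0 and u₂ > 0 be real numbers. Define the predicted positions s₁' = s₁ − Δt·(v₁ + u₁)/2 and s₂' = s₂ − Δt·(v₂ + u₂)/2 and the arrival times t₁ = s₁'/u₁ and t₂ = s₂'/u₂. Then t₁ + (l + M)/u₁ ≤ t₂ if and only if u₂·(s₁ − (Δt/2)·v₁ + l + M) ≤ u₁·(s₂ − (Δt/2)·v₂). -/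
/-- Reformulation of the lateral (conflict-zone) collision-avoidance
constraint: the arrival-time ordering constraint is equivalent to an
inequality linear in the commanded velocities. -/
theorem lateral_constraint_equiv (s₁ s₂ v₁ v₂ l M Δt : ℝ) (u₁ u₂ : ℝ)
    (hu₁ : 0 < u₁) (hu₂ : 0 < u₂) :
    (s₁ - Δt * (v₁ + u₁) / 2) / u₁ + (l + M) / u₁ ≤ (s₂ - Δt * (v₂ + u₂) / 2) / u₂
      ↔ u₂ * (s₁ - (Δt / 2) * v₁ + l + M) ≤ u₁ * (s₂ - (Δt / 2) * v₂) := by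
  rw [← add_div, div_le_div_iff₀ hu₁ hu₂]
  constructor <;> intro h <;> nlinarith [h]
end
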